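/- Let γ be an element of Homeo_+(I) viewed as a homeomorphism of X = (0,1). If the fixed-point set Fix(γ) ∩ (0,1) is finite and nonempty, then γ is hyperbolic-like relative to the compact set K = [min(Fix(γ) ∩ (0,1)), max(Fix(γ) ∩ (0,1))]. -/

import Mathlib

/-- The group of self-homeomorphisms of a topological space,
with `(f * g) x = f (g x)`. -/
instance homeoGroup (X : Type*) [TopologicalSpace X] : Group (X ≃ₜ X) where
  mul f g := g.trans f
  one := Homeomorph.refl X
  inv := Homeomorph.symm
  mul_assoc f g h := rfl
  one_mul f := Homeomorph.ext fun _ => rfl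
  mul_one f := Homeomorph.ext fun _ => rfl
  inv_mul_cancel f := Homeomorph.ext fun x => f.symm_apply_apply x

/-- `γ` is hyperbolic-like relative to `K`: there is a finite set `{x 0, …, x (n-1)}`
such that for all open neighborhoods `U i` of the `x i`, all sufficiently high
positive and negative powers of `γ` map `K \ ⋃ U i` into `⋃ U i`. -/
def IsHyperbolicLike {X : Type*} [TopologicalSpace X] (γ : X ≃ₜ X) (K : Set X) : Prop :=
  ∃ (n : ℕ) (x : Fin n → X),
    ∀ U : Fin n → Set X, (∀ i, IsOpen (U i) ∧ x i ∈ U i) →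
      ∃ M : ℕ, ∀ m : ℕ, M < m →
        (γ ^ m) '' (K \ ⋃ i, U i) ⊆ (⋃ i, U i) ∧
        (γ ^ m).symm '' (K \ ⋃ i, U i) ⊆ (⋃ i, U i)

/-!
Between two consecutive fixed points a continuous map has no fixed point, so by the intermediate
value theorem it moves every point of that gap in the same direction. An orbit in the gap is then
monotone and bounded, and its limit is a fixed point, hence the endpoint it moves towards. Off a
neighbourhood `V` of the finitely many fixed points of `[a, b]`, each gap meets `[a, b] \ V` in a
set bounded away from its repelling end, so monotonicity of the iterates makes the convergence
uniform there. The same argument for `γ⁻¹` gives the hyperbolic-like property.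
-/

open Set Filter Topology Function

section Dynamics

variable {X : Type*} [ConditionallyCompleteLinearOrder X] [TopologicalSpace X] [OrderTopology X]
  {f : X → X}

theorem tendsto_iterate_of_forall_lt_map {x L : X} (hf : Monotone f) (hc : Continuous f)
    (hL : IsFixedPt f L) (hxL : x ≤ L) (hup : ∀ y ∈ Ico x L, y < f y) :
    Tendsto (fun n => f^[n] x) atTop (𝓝 L) := by
  have hx : x ≤ f x := by
    rcases hxL.lt_or_eq with h | rfl
    · exact (hup x ⟨le_rfl, h⟩).le
    · exact hL.ge
  have hle : ∀ n, f^[n] x ≤ L := fun n => (hf.iterate n hxL).trans_eq (hL.iterate n)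
  have hbdd : BddAbove (range fun n => f^[n] x) := ⟨L, forall_mem_range.2 hle⟩
  have hlim := tendsto_atTop_ciSup (hf.monotone_iterate_of_le_map hx) hbdd
  have hfix : IsFixedPt f (⨆ n, f^[n] x) := isFixedPt_of_tendsto_iterate hlim hc.continuousAt
  have hsup : ⨆ n, f^[n] x = L :=
    (ciSup_le hle).eq_of_not_lt fun hlt => (hup _ ⟨le_ciSup hbdd 0, hlt⟩).ne hfix.symm
  rwa [hsup] at hlim

theorem eventually_mapsTo_iterate_of_forall_lt_map {P L : X} {V : Set X} (hf : Monotone f)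
    (hc : Continuous f) (hL : IsFixedPt f L) (hPL : P < L) (hVP : V ∈ 𝓝 P) (hVL : V ∈ 𝓝 L)
    (hup : ∀ y ∈ Ioo P L, y < f y) :
    ∀ᶠ m in atTop, MapsTo f^[m] (Ioo P L \ V) V := by
  obtain ⟨u, ⟨hPu, huL⟩, huV⟩ := exists_Ico_subset_of_mem_nhds' hVP hPL
  obtain ⟨l, hlL, hlV⟩ := exists_Ioc_subset_of_mem_nhds hVL ⟨P, hPL⟩
  have hlim := tendsto_iterate_of_forall_lt_map hf hc hL huL
    fun y hy => hup y ⟨hPu.trans_le hy.1, hy.2⟩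
  filter_upwards [hlim.eventually (lt_mem_nhds hlL)] with m hm y hy
  have huy : u ≤ y := not_lt.1 fun hyu => hy.2 (huV ⟨hy.1.1.le, hyu⟩)
  exact hlV ⟨hm.trans_le (hf.iterate m huy), (hf.iterate m hy.1.2.le).trans_eq (hL.iterate m)⟩

theorem eventually_mapsTo_iterate_of_forall_map_lt {P L : X} {V : Set X} (hf : Monotone f)
    (hc : Continuous f) (hP : IsFixedPt f P) (hPL : P < L) (hVP : V ∈ 𝓝 P) (hVL : V ∈ 𝓝 L)
    (hdown : ∀ y ∈ Ioo P L, f y < y) :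
    ∀ᶠ m in atTop, MapsTo f^[m] (Ioo P L \ V) V := by
  have := eventually_mapsTo_iterate_of_forall_lt_map (X := Xᵒᵈ)
    (P := OrderDual.toDual L) (L := OrderDual.toDual P)
    hf.dual hc hP hPL hVL hVP fun y hy => hdown y ⟨hy.2, hy.1⟩
  filter_upwards [this] with m hm y hy
  exact hm ⟨⟨hy.1.2, hy.1.1⟩, hy.2⟩

theorem forall_lt_map_or_forall_map_lt [DenselyOrdered X] {P L : X} (hc : Continuous f)
    (hfix : ∀ y ∈ Ioo P L, ¬IsFixedPt f y) :
    (∀ y ∈ Ioo P L, y < f y) ∨ ∀ y ∈ Ioo P L, f y < y := by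
  by_contra! h
  obtain ⟨⟨y, hy, hfy⟩, z, hz, hzf⟩ := h
  obtain ⟨w, hw, hfw⟩ :=
    isPreconnected_Ioo.intermediate_value₂ hy hz hc.continuousOn continuousOn_id hfy hzf
  exact hfix w hw hfw

end Dynamics

theorem Set.Finite.exists_mem_Ioo_disjoint {X : Type*} [LinearOrder X] {s : Set X}
    (hs : s.Finite) {a b y : X} (ha : a ∈ s) (hb : b ∈ s) (hy : y ∈ Icc a b) (hys : y ∉ s) :
    ∃ P ∈ s, ∃ L ∈ s, y ∈ Ioo P L ∧ Disjoint (Ioo P L) s := by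
  obtain ⟨P, ⟨hPs, hPy⟩, hPmax⟩ :=
    exists_max_image {x ∈ s | x < y} id (hs.subset (sep_subset _ _))
    ⟨a, ha, hy.1.lt_of_ne (by rintro rfl; exact hys ha)⟩
  obtain ⟨L, ⟨hLs, hyL⟩, hLmin⟩ :=
    exists_min_image {x ∈ s | y < x} id (hs.subset (sep_subset _ _))
    ⟨b, hb, hy.2.lt_of_ne' (by rintro rfl; exact hys hb)⟩
  refine ⟨P, hPs, L, hLs, ⟨hPy, hyL⟩, disjoint_left.2 fun t ht hts => ?_⟩
  rcases lt_trichotomy t y with h | rfl | h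
  · exact (show t ≤ P from hPmax t ⟨hts, h⟩).not_gt ht.1
  · exact hys hts
  · exact (show L ≤ t from hLmin t ⟨hts, h⟩).not_gt ht.2

theorem eventually_mapsTo_iterate_Icc_diff {X : Type*} [ConditionallyCompleteLinearOrder X]
    [TopologicalSpace X] [OrderTopology X] [DenselyOrdered X] {f : X → X} {a b : X} {V : Set X}
    (hf : Monotone f) (hc : Continuous f) (ha : IsFixedPt f a) (hb : IsFixedPt f b)
    (hfin : (fixedPoints f ∩ Icc a b).Finite) (hV : IsOpen V)
    (hΦV : fixedPoints f ∩ Icc a b ⊆ V) :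
    ∀ᶠ m in atTop, MapsTo f^[m] (Icc a b \ V) V := by
  set Φ := fixedPoints f ∩ Icc a b
  set gaps := {p ∈ Φ ×ˢ Φ | p.1 < p.2 ∧ Disjoint (Ioo p.1 p.2) Φ}
  have hgaps : ∀ p ∈ gaps, ∀ᶠ m in atTop, MapsTo f^[m] (Ioo p.1 p.2 \ V) V := by
    rintro ⟨P, L⟩ ⟨⟨hP, hL⟩, hPL, hdisj⟩
    have hnofix : ∀ y ∈ Ioo P L, ¬IsFixedPt f y := fun y hy hfy =>
      disjoint_left.1 hdisj hy ⟨hfy, hP.2.1.trans hy.1.le, hy.2.le.trans hL.2.2⟩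
    have hVP := hV.mem_nhds (hΦV hP)
    have hVL := hV.mem_nhds (hΦV hL)
    rcases forall_lt_map_or_forall_map_lt hc hnofix with hup | hdown
    · exact eventually_mapsTo_iterate_of_forall_lt_map hf hc hL.1 hPL hVP hVL hup
    · exact eventually_mapsTo_iterate_of_forall_map_lt hf hc hP.1 hPL hVP hVL hdown
  filter_upwards [(eventually_all_finite ((hfin.prod hfin).subset (sep_subset _ _))).2 hgaps]
    with m hm y hy
  have hab : a ≤ b := hy.1.1.trans hy.1.2
  obtain ⟨P, hP, L, hL, hyPL, hdisj⟩ :=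
    hfin.exists_mem_Ioo_disjoint ⟨ha, left_mem_Icc.2 hab⟩ ⟨hb, right_mem_Icc.2 hab⟩ hy.1
      fun hyΦ => hy.2 (hΦV hyΦ)
  exact hm (P, L) ⟨⟨hP, hL⟩, hyPL.1.trans hyPL.2, hdisj⟩ ⟨hyPL, hy.2⟩

section HyperbolicLike

variable {X : Type*} [TopologicalSpace X]

theorem Homeomorph.coe_pow_eq_iterate (γ : X ≃ₜ X) (m : ℕ) : ⇑(γ ^ m) = (⇑γ)^[m] := by
  induction m with
  | zero => rfl
  | succ m ih => rw [pow_succ, iterate_succ, ← ih]; rfl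

theorem Homeomorph.coe_pow_symm_eq_iterate (γ : X ≃ₜ X) (m : ℕ) :
    ⇑(γ ^ m).symm = (⇑γ.symm)^[m] := by
  rw [← coe_pow_eq_iterate]
  exact congrArg DFunLike.coe (inv_pow γ m).symm

theorem isHyperbolicLike_of_finite {γ : X ≃ₜ X} {K S : Set X} (hS : S.Finite)
    (h : ∀ V, IsOpen V → S ⊆ V →
      ∀ᶠ m in atTop, MapsTo γ^[m] (K \ V) V ∧ MapsTo γ.symm^[m] (K \ V) V) :
    IsHyperbolicLike γ K := by
  let e := hS.toFinset.equivFin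
  refine ⟨_, fun i => e.symm i, fun U hU => ?_⟩
  have hSU : S ⊆ ⋃ i, U i := fun x hx => mem_iUnion.2
    ⟨e ⟨x, hS.mem_toFinset.2 hx⟩, by simpa using (hU (e ⟨x, hS.mem_toFinset.2 hx⟩)).2⟩
  obtain ⟨M, hM⟩ := eventually_atTop.1 (h _ (isOpen_iUnion fun i => (hU i).1) hSU)
  refine ⟨M, fun m hm => ?_⟩
  rw [Homeomorph.coe_pow_eq_iterate, Homeomorph.coe_pow_symm_eq_iterate]
  exact ⟨(hM m hm.le).1.image_subset, (hM m hm.le).2.image_subset⟩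

end HyperbolicLike

theorem Monotone.equiv_symm {X : Type*} [LinearOrder X] {e : X ≃ X} (he : Monotone e) :
    Monotone e.symm := fun x y hxy => by
  by_contra! h
  have : y ≤ x := by simpa using he h.le
  exact h.ne (by rw [le_antisymm hxy this])

theorem isHyperbolicLike_Icc {X : Type*} [ConditionallyCompleteLinearOrder X]
    [TopologicalSpace X] [OrderTopology X] [DenselyOrdered X] {γ : X ≃ₜ X} {a b : X}
    (hγ : Monotone γ) (ha : IsFixedPt γ a) (hb : IsFixedPt γ b)
    (hfin : (fixedPoints γ ∩ Icc a b).Finite) :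
    IsHyperbolicLike γ (Icc a b) := by
  have hsymm : fixedPoints γ.symm = fixedPoints γ := fixedPoints_symm (e := γ.toEquiv)
  refine isHyperbolicLike_of_finite hfin fun V hV hΦV => ?_
  refine (eventually_mapsTo_iterate_Icc_diff hγ γ.continuous ha hb hfin hV hΦV).and ?_
  rw [← hsymm] at hfin hΦV
  exact eventually_mapsTo_iterate_Icc_diff (Monotone.equiv_symm (e := γ.toEquiv) hγ)
    γ.symm.continuous ha.equiv_symm hb.equiv_symm hfin hV hΦV

namespace unitInterval

theorem coe_mem_Ioo_iff {t : I} : (t : ℝ) ∈ Ioo 0 1 ↔ t ≠ 0 ∧ t ≠ 1 := by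
  rw [← unitInterval.pos_iff_ne_zero, ← unitInterval.lt_one_iff_ne_one]
  rfl

theorem map_zero_of_monotone {γ : I ≃ₜ I} (hγ : Monotone γ) : γ 0 = 0 := by
  obtain ⟨t, ht⟩ := γ.surjective 0
  exact le_antisymm ((hγ nonneg').trans_eq ht) nonneg'

theorem map_one_of_monotone {γ : I ≃ₜ I} (hγ : Monotone γ) : γ 1 = 1 := by
  obtain ⟨t, ht⟩ := γ.surjective 1
  exact le_antisymm le_one' (ht.symm.trans_le (hγ le_one'))

theorem coe_map_mem_Ioo {γ : I ≃ₜ I} (h0 : γ 0 = 0) (h1 : γ 1 = 1) {t : I}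
    (ht : (t : ℝ) ∈ Ioo 0 1) : (γ t : ℝ) ∈ Ioo 0 1 := by
  rw [coe_mem_Ioo_iff] at ht ⊢
  exact ⟨(γ.injective.ne_iff' h0).2 ht.1, (γ.injective.ne_iff' h1).2 ht.2⟩

def restrictIoo (γ : I ≃ₜ I) (h0 : γ 0 = 0) (h1 : γ 1 = 1) :
    Ioo (0 : ℝ) 1 ≃ₜ Ioo (0 : ℝ) 1 where
  toFun t := ⟨γ ⟨t, Ioo_subset_Icc_self t.2⟩, coe_map_mem_Ioo h0 h1 t.2⟩
  invFun t := ⟨γ.symm ⟨t, Ioo_subset_Icc_self t.2⟩,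
    coe_map_mem_Ioo (γ.symm_apply_eq.2 h0.symm) (γ.symm_apply_eq.2 h1.symm) t.2⟩
  left_inv t := by simp
  right_inv t := by simp
  continuous_toFun := by fun_prop
  continuous_invFun := by fun_prop

end unitInterval

/-- An orientation-preserving homeomorphism of `[0,1]` with finitely many (and at
least one) interior fixed points, viewed as a homeomorphism of `(0,1)`, is
hyperbolic-like relative to `[min Fix, max Fix]`. -/
theorem hyperbolicLike_of_finite_fix
    (γ : unitInterval ≃ₜ unitInterval)
    (hmono : Monotone (⇑γ : unitInterval → unitInterval)) :
    let F : Set ℝ := {r | r ∈ Set.Ioo (0 : ℝ) 1 ∧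
      ∃ h : r ∈ unitInterval, γ ⟨r, h⟩ = ⟨r, h⟩}
    F.Finite → F.Nonempty →
    ∃ γ' : ↥(Set.Ioo (0 : ℝ) 1) ≃ₜ ↥(Set.Ioo (0 : ℝ) 1),
      (∀ t : ↥(Set.Ioo (0 : ℝ) 1),
        ((γ' t : ℝ)) = ((γ ⟨(t : ℝ), ⟨t.2.1.le, t.2.2.le⟩⟩ : unitInterval) : ℝ)) ∧
      IsHyperbolicLike γ' {t : ↥(Set.Ioo (0 : ℝ) 1) | (t : ℝ) ∈ Set.Icc (sInf F) (sSup F)} := by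
  intro F hfin hne
  let γ' := unitInterval.restrictIoo γ (unitInterval.map_zero_of_monotone hmono)
    (unitInterval.map_one_of_monotone hmono)
  refine ⟨γ', fun t => rfl, ?_⟩
  have hfix : ∀ t, IsFixedPt γ' t ↔ (t : ℝ) ∈ F := fun t => by
    refine ⟨fun h => ⟨t.2, Ioo_subset_Icc_self t.2, ?_⟩, fun ⟨_, _, h⟩ => ?_⟩ <;>
    · have := congrArg Subtype.val h
      exact Subtype.ext this
  have hinf : sInf F ∈ F := hne.csInf_mem hfin
  have hsup : sSup F ∈ F := hne.csSup_mem hfin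
  -- `Ioo 0 1` is conditionally complete only as an order-connected subset of `ℝ`, via a local
  -- instance extending its subtype order; the set in the goal is then `Icc a b` definitionally.
  let : Inhabited (Ioo (0 : ℝ) 1) := ⟨⟨sInf F, hinf.1⟩⟩
  let := ordConnectedSubsetConditionallyCompleteLinearOrder (Ioo (0 : ℝ) 1)
  exact isHyperbolicLike_Icc (γ := γ') (a := ⟨sInf F, hinf.1⟩) (b := ⟨sSup F, hsup.1⟩)
    (fun s t hst => hmono hst) ((hfix _).2 hinf) ((hfix _).2 hsup)
    ((hfin.preimage Subtype.val_injective.injOn).subset fun t ht => (hfix t).1 ht.1)
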